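/- Let a, a_1, …, a_n ∈ ℝ^d with a ≠ 0, write b = ‖a‖ and x* = −a/b, and let x_{n+1} = P_B(−η·(a_1 + ⋯ + a_n)/√n) be the action of the lazy anytime Subgradient algorithm with parameter η > 0 and base point 0 on the closed unit ball B of ℝ^d. Set ε = (1/√n)·Σ_{i=1}^n (a − a_i). If n ≥ 4/(η²b²) and ‖ε‖ ≤ (√n/2)·b, then a·(x_{n+1} − x*) ≤ b·(1 − √(1 − 4‖ε‖²/(b²·n))). -/
import Mathlib


open Finset
open scoped RealInnerProductSpace

/-- `IsProjOn X p q` says that `q` is the Euclidean nearest-point projection of `p`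
onto the set `X`. -/
def IsProjOn {d : ℕ} (X : Set (EuclideanSpace ℝ (Fin d)))
    (p q : EuclideanSpace ℝ (Fin d)) : Prop :=
  q ∈ X ∧ ∀ z ∈ X, ‖p - q‖ ≤ ‖p - z‖

set_option maxHeartbeats 2000000 in
/-- Lemma 3: small error terms lead to small instantaneous pseudo-regret on the unit
ball. -/
theorem ball_small_error_small_regret {d : ℕ}
    (a : EuclideanSpace ℝ (Fin d)) (ha : a ≠ 0)
    (n : ℕ)
    (A : ℕ → EuclideanSpace ℝ (Fin d))
    (η : ℝ) (hη : 0 < η)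
    (x' : EuclideanSpace ℝ (Fin d))
    (hx' : IsProjOn (Metric.closedBall (0 : EuclideanSpace ℝ (Fin d)) 1)
      (-((η / Real.sqrt n) • ∑ i ∈ Icc 1 n, A i)) x')
    (hn : 4 / (η ^ 2 * ‖a‖ ^ 2) ≤ (n : ℝ))
    (hε : ‖(Real.sqrt n)⁻¹ • ∑ i ∈ Icc 1 n, (a - A i)‖ ≤ Real.sqrt n / 2 * ‖a‖) :
    ⟪a, x' - (-(‖a‖⁻¹ • a))⟫ ≤
      ‖a‖ * (1 - Real.sqrt (1 -
        4 * ‖(Real.sqrt n)⁻¹ • ∑ i ∈ Icc 1 n, (a - A i)‖ ^ 2 / (‖a‖ ^ 2 * n))) := by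
  have hb : 0 < ‖a‖ := norm_pos_iff.mpr ha
  set b := ‖a‖ with hbdef
  clear_value b
  have hn0 : 0 < (n : ℝ) := lt_of_lt_of_le (by positivity) hn
  set r := Real.sqrt n with hrdef
  have hr : 0 < r := by rw [hrdef]; exact Real.sqrt_pos.mpr hn0
  have hr2 : r ^ 2 = (n : ℝ) := by rw [hrdef]; exact Real.sq_sqrt hn0.le
  clear_value r
  set E : EuclideanSpace ℝ (Fin d) := r⁻¹ • ∑ i ∈ Icc 1 n, (a - A i) with hE
  clear_value E
  set t := ‖E‖ with htdef
  have ht0 : 0 ≤ t := htdef ▸ norm_nonneg _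
  clear_value t
  have ht : 2 * t ≤ r * b := by nlinarith [hε]
  set p : EuclideanSpace ℝ (Fin d) := -((η / r) • ∑ i ∈ Icc 1 n, A i) with hp
  clear_value p
  have hsum : ∑ i ∈ Icc 1 n, A i = (n : ℝ) • a - r • E := by
    have h1 : r • E = ∑ i ∈ Icc 1 n, (a - A i) := by
      rw [hE, smul_smul, mul_inv_cancel₀ hr.ne', one_smul]
    have h2 : ∑ i ∈ Icc 1 n, (a - A i) = (n : ℝ) • a - ∑ i ∈ Icc 1 n, A i := by
      rw [Finset.sum_sub_distrib, Finset.sum_const, Nat.card_Icc]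
      simp [← Nat.cast_smul_eq_nsmul ℝ]
    rw [h1, h2]; abel
  have hpe : p = η • (E - r • a) := by
    rw [hp, hsum]
    rw [smul_sub, smul_smul, smul_smul, neg_sub]
    rw [smul_sub]
    congr 1
    · congr 1
      field_simp
    · rw [smul_smul]
      congr 1
      rw [← hr2]; field_simp
  set u := ⟪a, E⟫ with hudef
  clear_value u
  have hut : u ≤ b * t := by
    rw [hudef, htdef, hbdef]; exact real_inner_le_norm a E
  have hap : ⟪a, p⟫ = η * (u - r * b ^ 2) := by
    rw [hpe, real_inner_smul_right, inner_sub_right, real_inner_smul_right,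
      real_inner_self_eq_norm_sq, ← hudef, ← hbdef]
    try ring
  have hra : ‖r • a‖ = r * b := by
    rw [norm_smul, Real.norm_eq_abs, abs_of_pos hr, ← hbdef]
  have hpnorm : ‖p‖ = η * ‖E - r • a‖ := by
    rw [hpe, norm_smul, Real.norm_eq_abs, abs_of_pos hη]
  have hpn2 : ‖p‖ ^ 2 = η ^ 2 * (t ^ 2 - 2 * r * u + r ^ 2 * b ^ 2) := by
    rw [hpnorm, mul_pow]
    congr 1
    rw [@norm_sub_sq_real, real_inner_smul_right, real_inner_comm, ← hudef, hra, htdef]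
    ring
  have hpl : η * (r * b - t) ≤ ‖p‖ := by
    rw [hpnorm]
    have h1 : r * b - t ≤ ‖E - r • a‖ := by
      have h2 := norm_sub_norm_le (r • a) E
      rw [hra, norm_sub_rev, ← htdef] at h2
      linarith
    nlinarith
  have hηrb : 2 ≤ η * (r * b) := by
    have h4 : 4 ≤ (n : ℝ) * (η ^ 2 * b ^ 2) := by
      rw [div_le_iff₀ (by positivity)] at hn
      linarith
    have h4' : 4 ≤ (η * (r * b)) ^ 2 := by
      rw [← hr2] at h4; linear_combination h4
    nlinarith [h4', mul_pos hη (mul_pos hr hb)]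
  have hp1 : 1 ≤ ‖p‖ := by
    have h6 : 0 ≤ η * (r * b - 2 * t) :=
      mul_nonneg hη.le (by linarith only [ht])
    have e1 : η * (r * b - t) = η * (r * b) - η * t := by ring
    have e2 : η * (r * b - 2 * t) = η * (r * b) - 2 * (η * t) := by ring
    linarith only [hpl, hηrb, h6, e1, e2]
  have hppos : 0 < ‖p‖ := lt_of_lt_of_le one_pos hp1
  -- identify x' = ‖p‖⁻¹ • p
  have hx1 : ‖x'‖ ≤ 1 := by
    have h := hx'.1
    simpa [Metric.mem_closedBall, dist_zero_right] using h
  have hqmem : ‖p‖⁻¹ • p ∈ Metric.closedBall (0 : EuclideanSpace ℝ (Fin d)) 1 := by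
    simp only [Metric.mem_closedBall, dist_zero_right, norm_smul, Real.norm_eq_abs,
      abs_of_pos (inv_pos.mpr hppos)]
    rw [inv_mul_cancel₀ hppos.ne']
  have hle : ‖p - x'‖ ≤ ‖p‖ - 1 := by
    have h1 := hx'.2 _ hqmem
    have h2 : ‖p - ‖p‖⁻¹ • p‖ = ‖p‖ - 1 := by
      have h3 : p - ‖p‖⁻¹ • p = (1 - ‖p‖⁻¹) • p := by
        rw [sub_smul, one_smul]
      rw [h3, norm_smul, Real.norm_eq_abs, abs_of_nonneg, sub_mul, one_mul,
        inv_mul_cancel₀ hppos.ne']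
      rw [sub_nonneg]
      exact inv_le_one_of_one_le₀ hp1
    rw [h2] at h1
    exact h1
  have hexp : ‖p - x'‖ ^ 2 = ‖p‖ ^ 2 - 2 * ⟪p, x'⟫ + ‖x'‖ ^ 2 := norm_sub_sq_real p x'
  have hsq1 : ‖p - x'‖ ^ 2 ≤ (‖p‖ - 1) ^ 2 :=
    pow_le_pow_left₀ (norm_nonneg _) hle 2
  have hCS : ⟪p, x'⟫ ≤ ‖p‖ * ‖x'‖ := real_inner_le_norm p x'
  have hs1 : 1 ≤ ‖x'‖ := by
    nlinarith only [hexp, hsq1, hCS, hp1, norm_nonneg x', hx1, sq_nonneg (1 - ‖x'‖)]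
  have hx'1 : ‖x'‖ = 1 := le_antisymm hx1 hs1
  have hsx : ‖x'‖ ^ 2 = 1 := by rw [hx'1]; norm_num
  have hIl : ‖p‖ ≤ ⟪p, x'⟫ := by nlinarith only [hexp, hsq1, hsx]
  have hinner : ⟪p, x'⟫ = ‖p‖ * ‖x'‖ := by
    rw [hx'1, mul_one]
    rw [hx'1, mul_one] at hCS
    exact le_antisymm hCS hIl
  have hxp : x' = ‖p‖⁻¹ • p := by
    have h := inner_eq_norm_mul_iff_real.mp hinner
    rw [hx'1, one_smul] at h
    calc x' = ‖p‖⁻¹ • (‖p‖ • x') := by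
            rw [smul_smul, inv_mul_cancel₀ hppos.ne', one_smul]
    _ = ‖p‖⁻¹ • p := congrArg (fun z => ‖p‖⁻¹ • z) h.symm
  -- rewrite goal
  have hgoal_lhs : ⟪a, x' - (-(b⁻¹ • a))⟫ = ‖p‖⁻¹ * ⟪a, p⟫ + b := by
    rw [inner_sub_right, inner_neg_right, real_inner_smul_right,
      real_inner_self_eq_norm_sq, hxp, real_inner_smul_right, ← hbdef]
    field_simp
    ring
  rw [hgoal_lhs]
  -- the square root
  have h4t : 4 * t ^ 2 ≤ b ^ 2 * (n : ℝ) := by rw [← hr2]; nlinarith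
  have hKarg : 0 ≤ 1 - 4 * t ^ 2 / (b ^ 2 * (n : ℝ)) := by
    rw [sub_nonneg]
    exact (div_le_one (by positivity)).mpr h4t
  set K := Real.sqrt (1 - 4 * t ^ 2 / (b ^ 2 * (n : ℝ))) with hKdef
  have hK0 : 0 ≤ K := hKdef ▸ Real.sqrt_nonneg _
  have hK2 : K ^ 2 = 1 - 4 * t ^ 2 / (b ^ 2 * (n : ℝ)) := by
    rw [hKdef]; exact Real.sq_sqrt hKarg
  clear_value K
  have hrhs0 : 0 ≤ η * (r * b ^ 2 - u) := by
    have e : b * (r * b - t) = r * b ^ 2 - b * t := by ring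
    have h7 : 0 ≤ r * b ^ 2 - u := by
      linarith only [hut, e, mul_nonneg hb.le (by linarith only [ht, ht0] : (0:ℝ) ≤ r * b - t)]
    exact mul_nonneg hη.le h7
  have key : (b ^ 2 * r ^ 2 - 4 * t ^ 2) * (t ^ 2 - 2 * r * u + r ^ 2 * b ^ 2)
      ≤ r ^ 2 * (r * b ^ 2 - u) ^ 2 := by
    nlinarith only [ht, ht0, hr.le, hb.le, hut, sq_nonneg (r * u),
      mul_nonneg (by positivity : (0:ℝ) ≤ 8 * r * t ^ 2) (sub_nonneg.mpr hut),
      mul_nonneg (mul_nonneg (sq_nonneg t) (by linarith : (0:ℝ) ≤ r * b - 2 * t))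
        (by nlinarith : (0:ℝ) ≤ 3 * (r * b) - 2 * t)]
  have hsqmain : (b * K * ‖p‖) ^ 2 ≤ (η * (r * b ^ 2 - u)) ^ 2 := by
    have e1 : K ^ 2 = (b ^ 2 * r ^ 2 - 4 * t ^ 2) / (b ^ 2 * r ^ 2) := by
      rw [hK2, ← hr2]; field_simp
    calc (b * K * ‖p‖) ^ 2 = b ^ 2 * K ^ 2 * ‖p‖ ^ 2 := by ring
    _ = b ^ 2 * ((b ^ 2 * r ^ 2 - 4 * t ^ 2) / (b ^ 2 * r ^ 2)) *
        (η ^ 2 * (t ^ 2 - 2 * r * u + r ^ 2 * b ^ 2)) := by rw [e1, hpn2]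
    _ ≤ (η * (r * b ^ 2 - u)) ^ 2 := by
        rw [show b ^ 2 * ((b ^ 2 * r ^ 2 - 4 * t ^ 2) / (b ^ 2 * r ^ 2)) *
            (η ^ 2 * (t ^ 2 - 2 * r * u + r ^ 2 * b ^ 2)) =
            b ^ 2 * (b ^ 2 * r ^ 2 - 4 * t ^ 2) *
            (η ^ 2 * (t ^ 2 - 2 * r * u + r ^ 2 * b ^ 2)) / (b ^ 2 * r ^ 2) from by ring,
          div_le_iff₀ (by positivity : (0:ℝ) < b ^ 2 * r ^ 2)]
        nlinarith only [mul_le_mul_of_nonneg_left key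
          (by positivity : (0:ℝ) ≤ η ^ 2 * b ^ 2)]
  have hmain : b * K * ‖p‖ ≤ η * (r * b ^ 2 - u) := by
    nlinarith only [hsqmain, hrhs0, mul_nonneg (mul_nonneg hb.le hK0) hppos.le]
  have hfin : ‖p‖⁻¹ * ⟪a, p⟫ ≤ -(b * K) := by
    rw [hap, inv_mul_le_iff₀ hppos]
    have e2 : η * (u - r * b ^ 2) = -(η * (r * b ^ 2 - u)) := by ring
    have e3 : ‖p‖ * -(b * K) = -(b * K * ‖p‖) := by ring
    linarith only [hmain, e2, e3]
  have e4 : b * (1 - K) = b - b * K := by ring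
  linarith only [hfin, e4]
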